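/- arXiv:2502.13085 — 2 statements merged into one kernel-verified Lean document; each statement's English description precedes it below -/
import Mathlib

section
/- Let f: ℝⁿ → ℝⁿ be a continuously differentiable map whose Jacobian matrix df(x) is, at every point x, lower triangular with strictly positive diagonal entries (that is, ∂f_i/∂x_j(x) = 0 for all j > i and ∂f_i/∂x_i(x) > 0 for all i and all x). Then f is injective. -/
/-!
Compare two points `a`, `b` with `f a = f b` coordinate by coordinate, in increasing order.
If they agree below `i`, the mean value theorem for `f_i` on the segment `[a, b]` gives a
point `z` with `df(z)(b - a)_i = 0`; since `b - a` vanishes below `i` and `df(z)` is lower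
triangular, this number is `(b_i - a_i) ∂_i f_i(z)`, so `a_i = b_i`.
-/

section LowerTriangular

variable {ι : Type*}

theorem exists_fderiv_apply_eq_zero_of_apply_eq {E : Type*} [NormedAddCommGroup E]
    [NormedSpace ℝ E] {f : E → ι → ℝ} (hf : Differentiable ℝ f) {a b : E} {i : ι}
    (h : f a i = f b i) : ∃ z, fderiv ℝ f z (b - a) i = 0 := by
  obtain ⟨z, -, hz⟩ := domain_mvt (f := fun x => f x i) (s := Set.univ)
    (f' := fun z => (ContinuousLinearMap.proj i).comp (fderiv ℝ f z))
    (fun z _ => (hasFDerivAt_pi'.1 (hf z).hasFDerivAt i).hasFDerivWithinAt)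
    convex_univ (Set.mem_univ a) (Set.mem_univ b)
  exact ⟨z, by simpa [h] using hz.symm⟩

variable [Fintype ι] [LinearOrder ι]

theorem LinearMap.apply_eq_mul_diag_of_lowerTriangular {R : Type*} [Semiring R]
    (L : (ι → R) →ₗ[R] (ι → R)) (hL : ∀ i j, i < j → L (Pi.single j 1) i = 0)
    {v : ι → R} {i : ι} (hv : ∀ j < i, v j = 0) :
    L v i = v i * L (Pi.single i 1) i := by
  have hsingle : ∀ j, L (Pi.single j (v j)) i = v j * L (Pi.single j 1) i := fun j => by
    have hsmul : Pi.single j (v j) = v j • (Pi.single j 1 : ι → R) := by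
      rw [← Pi.single_smul', smul_eq_mul, mul_one]
    rw [hsmul, map_smul, Pi.smul_apply, smul_eq_mul]
  conv_lhs => rw [← Finset.univ_sum_single v, map_sum, Finset.sum_apply]
  rw [Finset.sum_eq_single i, hsingle]
  · intro j _ hji
    rcases hji.lt_or_gt with hji | hij
    · rw [hsingle, hv j hji, zero_mul]
    · rw [hsingle, hL i j hij, mul_zero]
  · simp

theorem injective_of_fderiv_lowerTriangular {f : (ι → ℝ) → ι → ℝ} (hf : Differentiable ℝ f)
    (h_upper : ∀ x i j, i < j → fderiv ℝ f x (Pi.single j 1) i = 0)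
    (h_diag : ∀ x i, fderiv ℝ f x (Pi.single i 1) i ≠ 0) :
    Function.Injective f := by
  intro a b hab
  funext i
  induction i using WellFoundedLT.induction with
  | ind i ih =>
    obtain ⟨z, hz⟩ := exists_fderiv_apply_eq_zero_of_apply_eq hf (congrFun hab i)
    have hv : ∀ j < i, (b - a) j = 0 := fun j hj => by simp [ih j hj]
    have hdiag : fderiv ℝ f z (b - a) i = (b - a) i * fderiv ℝ f z (Pi.single i 1) i :=
      (fderiv ℝ f z).toLinearMap.apply_eq_mul_diag_of_lowerTriangular (h_upper z) hv
    rw [hdiag] at hz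
    have hi : (b - a) i = 0 := (mul_eq_zero.1 hz).resolve_right (h_diag z i)
    simpa [sub_eq_zero, eq_comm] using hi

end LowerTriangular

/-- A continuously differentiable map `f : ℝⁿ → ℝⁿ` whose Jacobian is everywhere lower
triangular (`∂f_i/∂x_j = 0` for `j > i`) with strictly positive diagonal entries
(`∂f_i/∂x_i > 0`) is injective. -/
theorem lowerTriangular_jacobian_injective
    (n : ℕ) (f : (Fin n → ℝ) → (Fin n → ℝ))
    (hf : ContDiff ℝ 1 f)
    (h_upper : ∀ (x : Fin n → ℝ) (i j : Fin n), i < j →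
      fderiv ℝ f x (Pi.single j 1) i = 0)
    (h_diag : ∀ (x : Fin n → ℝ) (i : Fin n), 0 < fderiv ℝ f x (Pi.single i 1) i) :
    Function.Injective f :=
  injective_of_fderiv_lowerTriangular (hf.differentiable one_ne_zero) h_upper
    fun x i => (h_diag x i).ne'
end

section
/- Let μ and ν be absolutely continuous probability measures on ℝ^{2n} = ℝⁿ × ℝⁿ, and let μ₁, ν₁ denote their marginal distributions on the first n coordinates and μ₂, ν₂ their marginal distributions on the last n coordinates. Let T₁: ℝⁿ → ℝⁿ and T₂: ℝⁿ → ℝⁿ be measurable maps such that (T₁)_*μ₁ = ν₁ and (T₂)_*μ₂ = ν₂. Then there exists a measurable map T: ℝ^{2n} → ℝ^{2n} with T_*μ = ν of the form T(y,x) = (T₁(y), T̄(y, T₂(x))) for a suitable measurable map T̄: ℝ^{2n} → ℝⁿ. -/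
/-!
Disintegrate `μ = μ₁ ⊗ κ` and `ν = ν₁ ⊗ ρ` along the first factor. As `μ` is absolutely
continuous, so is `κ y` for almost every `y`; as `(T₂)_* μ₂ = ν₂` has no atoms, every fibre of
`T₂` is `μ₂`-null, hence `κ y`-null for almost every `y`, simultaneously for all fibres because
only countably many fibres have positive Lebesgue measure. So the laws `(T₂)_* κ y` are atomless.
Their distribution functions (after a Borel embedding into `ℝ`) push them to the uniform law on
`[0, 1]`, jointly measurably in `y`, and a measurable representation of the kernel `ρ` by the
uniform law then gives `T̄(y, ·)` with `T̄(y, ·)_* (T₂)_* κ y = ρ (T₁ y)`. Integrating over `y`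
against `μ₁`, whose image under `T₁` is `ν₁`, gives `T_* μ = ν`.
-/

open MeasureTheory ProbabilityTheory Set unitInterval

namespace ProbabilityTheory

noncomputable def cdfUnitInterval (P : Measure ℝ) (x : ℝ) : I :=
  ⟨cdf P x, cdf_nonneg P x, cdf_le_one P x⟩

lemma measurable_cdfUnitInterval (P : Measure ℝ) : Measurable (cdfUnitInterval P) :=
  (cdf P).mono.measurable.subtype_mk

lemma measurable_cdf_uncurry {α : Type*} [MeasurableSpace α] (κ : Kernel α ℝ)
    [IsMarkovKernel κ] :
    Measurable fun p : α × ℝ => cdf (κ p.1) p.2 := by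
  simp_rw [cdf_eq_real, measureReal_def]
  refine Measurable.ennreal_toReal ?_
  exact (κ.comap Prod.fst measurable_fst).measurable_kernel_prodMk_left
    (t := {q : (α × ℝ) × ℝ | q.2 ≤ q.1.2}) (measurableSet_le measurable_snd measurable_fst.snd)

section NullSingletonClass

variable {P : Measure ℝ} [IsProbabilityMeasure P] [NullSingletonClass P]

lemma continuous_cdf : Continuous (cdf P) := by
  refine continuous_iff_continuousAt.2 fun x =>
    (cdf P).mono.continuousAt_iff_leftLim_eq_rightLim.2 ?_
  have h := (cdf P).measure_singleton x
  rw [measure_cdf, measure_singleton, eq_comm, ENNReal.ofReal_eq_zero, sub_nonpos] at h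
  rw [(cdf P).rightLim_eq]
  exact le_antisymm ((cdf P).mono.leftLim_le le_rfl) h

lemma measure_setOf_cdf_le {t : ℝ} (ht₀ : 0 ≤ t) (ht₁ : t ≤ 1) :
    P {x | cdf P x ≤ t} = ENNReal.ofReal t := by
  set A := {x | cdf P x ≤ t}
  rcases A.eq_empty_or_nonempty with hA | hA
  · have : t ≤ 0 := by
      by_contra! ht
      obtain ⟨x, hx⟩ := ((tendsto_cdf_atBot P).eventually (gt_mem_nhds ht)).exists
      exact hA.subset (show x ∈ A from hx.le)
    rw [hA, measure_empty, ENNReal.ofReal_of_nonpos this]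
  rcases ht₁.eq_or_lt with rfl | ht₁
  · rw [show A = univ from eq_univ_of_forall (cdf_le_one P), measure_univ, ENNReal.ofReal_one]
  obtain ⟨x₁, hx₁⟩ := ((tendsto_cdf_atTop P).eventually (lt_mem_nhds ht₁)).exists
  have hA_bdd : BddAbove A := ⟨x₁, fun x hx => ((cdf P).mono.reflect_lt (hx.trans_lt hx₁)).le⟩
  set a := sSup A
  have ha : a ∈ A := (isClosed_le continuous_cdf continuous_const).csSup_mem hA hA_bdd
  have hA_eq : A = Iic a := Subset.antisymm (fun x hx => le_csSup hA_bdd hx)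
    fun x hx => ((cdf P).mono hx).trans ha
  obtain ⟨c, hc⟩ := intermediate_value_univ a x₁ continuous_cdf ⟨ha, hx₁.le⟩
  have hc_le : c ≤ a := le_csSup hA_bdd (show c ∈ A from hc.le)
  rw [hA_eq, ← ofReal_cdf, le_antisymm ha (hc.ge.trans ((cdf P).mono hc_le))]

lemma map_cdfUnitInterval : P.map (cdfUnitInterval P) = volume := by
  refine Measure.ext_of_Iic _ _ fun t => ?_
  rw [Measure.map_apply (measurable_cdfUnitInterval P) measurableSet_Iic, volume_Iic]
  exact measure_setOf_cdf_le t.2.1 t.2.2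

end NullSingletonClass

namespace Kernel

variable {X Y Z W : Type*} [MeasurableSpace X] [MeasurableSpace Y] [MeasurableSpace Z]
  [MeasurableSpace W] [StandardBorelSpace Y]

lemma exists_measurable_map_apply_eq_volume (κ : Kernel X Y) [IsMarkovKernel κ] :
    ∃ F : X → Y → I, Measurable (Function.uncurry F) ∧
      ∀ a, NullSingletonClass (κ a) → (κ a).map (F a) = volume := by
  have he := measurableEmbedding_embeddingReal Y
  have := IsMarkovKernel.map κ he.measurable
  refine ⟨fun a y => cdfUnitInterval (κ.map (embeddingReal Y) a) (embeddingReal Y y), ?_, ?_⟩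
  · exact ((measurable_cdf_uncurry _).comp
      (measurable_fst.prodMk (he.measurable.comp measurable_snd))).subtype_mk
  intro a ha
  have : NullSingletonClass ((κ a).map (embeddingReal Y)) := ⟨fun c => by
    rw [Measure.map_apply he.measurable (measurableSet_singleton c)]
    exact (subsingleton_singleton.preimage he.injective).measure_zero _⟩
  have := Measure.isProbabilityMeasure_map (μ := κ a) he.measurable.aemeasurable
  rw [← map_cdfUnitInterval (P := (κ a).map (embeddingReal Y)),
    Measure.map_map (measurable_cdfUnitInterval _) he.measurable]
  simp only [map_apply _ he.measurable]
  rfl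

lemma exists_measurable_map_apply_eq [Nonempty W] [StandardBorelSpace W] (κ : Kernel X Y)
    [IsMarkovKernel κ] (η : Kernel Z W) [IsMarkovKernel η] {f : X → Z} (hf : Measurable f) :
    ∃ G : X → Y → W, Measurable (Function.uncurry G) ∧
      ∀ a, NullSingletonClass (κ a) → (κ a).map (G a) = η (f a) := by
  obtain ⟨F, hF, hFκ⟩ := κ.exists_measurable_map_apply_eq_volume
  obtain ⟨g, hg, hgη⟩ := η.exists_measurable_map_eq_unitInterval
  refine ⟨fun a y => g (f a) (F a y), hg.comp ((hf.comp measurable_fst).prodMk hF), fun a ha => ?_⟩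
  rw [← hgη, ← hFκ a ha, Measure.map_map hg.of_uncurry_left hF.of_uncurry_left]
  rfl

end Kernel

variable {α β γ δ : Type*} [MeasurableSpace α] [MeasurableSpace β] [MeasurableSpace γ]
  [MeasurableSpace δ]

lemma ae_nullSingletonClass_map {κ : Kernel α β} {μ : Measure α} {m : Measure β} [SFinite m]
    (hac : ∀ᵐ a ∂μ, κ a ≪ m) [MeasurableSingletonClass γ] {g : β → γ} (hg : Measurable g)
    (hnull : ∀ c, ∀ᵐ a ∂μ, κ a (g ⁻¹' {c}) = 0) :
    ∀ᵐ a ∂μ, NullSingletonClass ((κ a).map g) := by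
  set C := {c | 0 < m (g ⁻¹' {c})}
  have hC : C.Countable := Measure.countable_meas_pos_of_disjoint_iUnion
    (fun c => hg (measurableSet_singleton c)) fun c d hcd => (disjoint_singleton.2 hcd).preimage g
  filter_upwards [hac, (ae_ball_iff hC).2 fun c _ => hnull c] with a hac_a hC_a
  refine ⟨fun c => ?_⟩
  rw [Measure.map_apply hg (measurableSet_singleton c)]
  by_cases hc : c ∈ C
  · exact hC_a c hc
  · exact hac_a (nonpos_iff_eq_zero.1 (not_lt.1 hc))

lemma map_compProd_eq_compProd {μ : Measure α} [SFinite μ] {κ : Kernel α β} [IsSFiniteKernel κ]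
    {η : Kernel γ δ} [IsSFiniteKernel η] {f : α → γ} {g : α → β → δ} (hf : Measurable f)
    (hg : Measurable (Function.uncurry g)) (h : ∀ᵐ a ∂μ, (κ a).map (g a) = η (f a)) :
    (μ ⊗ₘ κ).map (fun p => (f p.1, g p.1 p.2)) = μ.map f ⊗ₘ η := by
  have hT : Measurable fun p : α × β => (f p.1, g p.1 p.2) := (hf.comp measurable_fst).prodMk hg
  ext s hs
  rw [Measure.map_apply hT hs, Measure.compProd_apply (hT hs), Measure.compProd_apply hs,
    lintegral_map (η.measurable_kernel_prodMk_left hs) hf]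
  refine lintegral_congr_ae (h.mono fun a ha => ?_)
  dsimp only
  rw [← ha, Measure.map_apply hg.of_uncurry_left (measurable_prodMk_left hs)]
  rfl

lemma nullSingletonClass_snd_of_absolutelyContinuous {ν : Measure (α × β)} {m₁ : Measure α}
    {m₂ : Measure β} [MeasurableSingletonClass β] [SFinite m₂] [NullSingletonClass m₂]
    (h : ν ≪ m₁.prod m₂) :
    NullSingletonClass ν.snd :=
  ⟨fun c => by
    rw [Measure.snd_apply (measurableSet_singleton c), ← univ_prod]
    exact h (by rw [Measure.prod_prod, measure_singleton, mul_zero])⟩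

variable [StandardBorelSpace β] [Nonempty β]

lemma ae_condKernel_absolutelyContinuous (μ : Measure (α × β)) [IsFiniteMeasure μ]
    {m₁ : Measure α} {m₂ : Measure β} [SFinite m₁] [SFinite m₂] (h : μ ≪ m₁.prod m₂) :
    ∀ᵐ a ∂μ.fst, μ.condKernel a ≪ m₂ := by
  have : μ.fst ⊗ₘ μ.condKernel ≪ m₁ ⊗ₘ Kernel.const α m₂.toFinite := by
    rw [μ.disintegrate μ.condKernel, Measure.compProd_const]
    exact h.trans (Measure.AbsolutelyContinuous.rfl.prod (absolutelyContinuous_toFinite m₂))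
  filter_upwards [this.kernel_of_compProd] with a ha
  exact ha.trans (toFinite_absolutelyContinuous m₂)

lemma ae_condKernel_apply_eq_zero (μ : Measure (α × β)) [IsFiniteMeasure μ] {s : Set β}
    (hs : MeasurableSet s) (h : μ.snd s = 0) : ∀ᵐ a ∂μ.fst, μ.condKernel a s = 0 := by
  rw [← μ.disintegrate μ.condKernel, Measure.snd_compProd, Measure.bind_apply hs (by fun_prop)] at h
  exact (lintegral_eq_zero_iff (μ.condKernel.measurable_coe hs)).1 h

theorem exists_blockTriangular_map_eq [StandardBorelSpace δ] [Nonempty δ]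
    (μ : Measure (α × β)) (ν : Measure (γ × δ)) [IsProbabilityMeasure μ] [IsProbabilityMeasure ν]
    {m₁ : Measure α} {m₂ : Measure β} [SFinite m₁] [SFinite m₂] (hμ : μ ≪ m₁.prod m₂)
    {T₁ : α → γ} {T₂ : β → δ} (hT₁_meas : Measurable T₁) (hT₂_meas : Measurable T₂)
    (hT₁ : μ.fst.map T₁ = ν.fst) [NullSingletonClass (μ.snd.map T₂)] :
    ∃ Tbar : α × δ → δ, Measurable Tbar ∧
      μ.map (fun z => (T₁ z.1, Tbar (z.1, T₂ z.2))) = ν := by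
  set κ := μ.condKernel
  have := Kernel.IsMarkovKernel.map κ hT₂_meas
  have hκ_atomless : ∀ᵐ a ∂μ.fst, NullSingletonClass (κ.map T₂ a) := by
    simp_rw [Kernel.map_apply _ hT₂_meas]
    refine ae_nullSingletonClass_map (ae_condKernel_absolutelyContinuous μ hμ) hT₂_meas
      fun c => ae_condKernel_apply_eq_zero μ (hT₂_meas (measurableSet_singleton c)) ?_
    rw [← Measure.map_apply hT₂_meas (measurableSet_singleton c)]
    exact measure_singleton c
  obtain ⟨G, hG, hGν⟩ := (κ.map T₂).exists_measurable_map_apply_eq ν.condKernel hT₁_meas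
  refine ⟨Function.uncurry G, hG, ?_⟩
  have hGT₂ : Measurable (Function.uncurry fun a b => G a (T₂ b)) :=
    hG.comp (measurable_fst.prodMk (hT₂_meas.comp measurable_snd))
  calc μ.map (fun z => (T₁ z.1, G z.1 (T₂ z.2)))
      = (μ.fst ⊗ₘ κ).map (fun z => (T₁ z.1, G z.1 (T₂ z.2))) := by rw [μ.disintegrate κ]
    _ = μ.fst.map T₁ ⊗ₘ ν.condKernel := by
      refine map_compProd_eq_compProd hT₁_meas hGT₂ (hκ_atomless.mono fun a ha => ?_)
      rw [← hGν a ha, Kernel.map_apply _ hT₂_meas,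
        Measure.map_map hG.of_uncurry_left hT₂_meas]
      rfl
    _ = ν := by rw [hT₁, ν.disintegrate]

end ProbabilityTheory

open ProbabilityTheory

/-- Given absolutely continuous probability measures `μ, ν` on `ℝⁿ × ℝⁿ` and measurable maps
`T₁, T₂` transporting the respective marginals, there is a transport map `T` of `μ` to `ν`
of the form `T(y,x) = (T₁(y), T̄(y, T₂(x)))`. -/
theorem exists_blockTriangular_transport
    (n : ℕ) (μ ν : Measure ((Fin n → ℝ) × (Fin n → ℝ)))
    [IsProbabilityMeasure μ] [IsProbabilityMeasure ν]
    (hμ_ac : μ ≪ volume) (hν_ac : ν ≪ volume)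
    (T₁ T₂ : (Fin n → ℝ) → (Fin n → ℝ))
    (hT₁_meas : Measurable T₁) (hT₂_meas : Measurable T₂)
    (hT₁ : (μ.map Prod.fst).map T₁ = ν.map Prod.fst)
    (hT₂ : (μ.map Prod.snd).map T₂ = ν.map Prod.snd) :
    ∃ Tbar : (Fin n → ℝ) × (Fin n → ℝ) → (Fin n → ℝ), Measurable Tbar ∧
      μ.map (fun z : (Fin n → ℝ) × (Fin n → ℝ) => (T₁ z.1, Tbar (z.1, T₂ z.2))) = ν := by
  -- for `n = 0` Lebesgue measure is a Dirac mass, but then the space is a point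
  rcases Nat.eq_zero_or_pos n with rfl | hn
  · refine ⟨Prod.snd, measurable_snd, ?_⟩
    have := Measure.isProbabilityMeasure_map (μ := μ)
      (Subsingleton.aemeasurable (f := fun z : (Fin 0 → ℝ) × (Fin 0 → ℝ) => (T₁ z.1, T₂ z.2)))
    ext s -
    rcases s.eq_empty_or_nonempty with rfl | hs
    · simp
    · rw [Subsingleton.eq_univ_of_nonempty hs, measure_univ, measure_univ]
  have : Nonempty (Fin n) := ⟨⟨0, hn⟩⟩
  rw [Measure.volume_eq_prod] at hμ_ac hν_ac
  have : NullSingletonClass (μ.snd.map T₂) := by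
    rw [Measure.snd, hT₂]
    exact nullSingletonClass_snd_of_absolutelyContinuous hν_ac
  exact exists_blockTriangular_map_eq μ ν hμ_ac hT₁_meas hT₂_meas hT₁
end
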